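/- Any PARITY-decision tree computing the MAJORITY function on N bits has cost at least N + 1 - w(N), where w(N) is the Hamming weight of N. -/

import Mathlib

/-- A decision tree whose queries are parities of arbitrary subsets of the
N input bits (over GF(2)). -/
inductive ParityTree (N : ℕ) where
  | leaf (b : Bool)
  | node (Q : Finset (Fin N)) (t0 t1 : ParityTree N)

/-- Evaluation of a parity decision tree on an input. -/
def ParityTree.eval {N : ℕ} : ParityTree N → (Fin N → ZMod 2) → Bool
  | .leaf b, _ => b
  | .node Q t0 t1, x => if (∑ i ∈ Q, x i) = 0 then t0.eval x else t1.eval x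

/-- Cost (worst-case number of queries = depth) of a parity decision tree. -/
def ParityTree.cost {N : ℕ} : ParityTree N → ℕ
  | .leaf _ => 0
  | .node _ t0 t1 => 1 + max t0.cost t1.cost

/-!
A parity decision tree of cost `d` partitions `(ZMod 2)^N` into affine subspaces of codimension
at most `d`, so the intersection of `{x | T x = 1}` with any affine subspace of codimension `k`
has size divisible by `2^(N - d - k)`. For `N = 2m`, flipping all bits shows
`2 · #MAJ⁻¹(1) = 4^m + C(2m, m)`, and by Kummer `v₂ C(2m, m) = w(m) < 2m`, so
`v₂ #MAJ⁻¹(1) = w(m) - 1`. For `N = 2m + 1`, fixing the first bit to `1` leaves MAJ on `2m` bits.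
-/

open Finset Module

theorem card_pow_dvd_card_fiber {K V W : Type*} [Field K] [Fintype K] [AddCommGroup V]
    [Module K V] [Fintype V] [AddCommGroup W] [Module K W] [FiniteDimensional K W]
    [DecidableEq W] (φ : V →ₗ[K] W) (c : W) :
    Fintype.card K ^ (finrank K V - finrank K W) ∣ #{x | φ x = c} := by
  by_cases hc : c ∈ Set.range φ
  · rw [AddMonoidHom.card_fiber_eq_of_mem_range φ hc ⟨0, map_zero φ⟩]
    have hker : #{x | φ x = 0} = Fintype.card K ^ finrank K (LinearMap.ker φ) := by
      rw [← Nat.card_eq_fintype_card, ← natCard_eq_pow_finrank, ← Nat.card_eq_finsetCard]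
      simp
    rw [hker]
    refine pow_dvd_pow _ ?_
    have := φ.finrank_range_add_finrank_ker
    have := Submodule.finrank_le (LinearMap.range φ)
    omega
  · rw [filter_false_of_mem fun x _ hx => hc ⟨x, hx⟩, card_empty]
    exact dvd_zero _

def parityForm {R α : Type*} [CommSemiring R] (Q : Finset α) : Module.Dual R (α → R) :=
  ∑ i ∈ Q, LinearMap.proj i

@[simp]
theorem parityForm_apply {R α : Type*} [CommSemiring R] (Q : Finset α) (x : α → R) :
    parityForm Q x = ∑ i ∈ Q, x i := by
  simp [parityForm, LinearMap.sum_apply]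

theorem ZMod.ne_zero_iff_eq_one : ∀ a : ZMod 2, a ≠ 0 ↔ a = 1 := by decide

namespace ParityTree

variable {N : ℕ}

theorem card_filter_node_eval_eq_true_and (Q : Finset (Fin N)) (t₀ t₁ : ParityTree N)
    (P : (Fin N → ZMod 2) → Prop) [DecidablePred P] :
    #{x | (node Q t₀ t₁).eval x = true ∧ P x} =
      #{x | t₀.eval x = true ∧ parityForm Q x = 0 ∧ P x} +
        #{x | t₁.eval x = true ∧ parityForm Q x = 1 ∧ P x} := by
  rw [← card_filter_add_card_filter_not (p := fun x => parityForm Q x = 0), filter_filter,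
    filter_filter]
  congr 2 <;> ext x <;> by_cases hx : parityForm Q x = 0 <;>
    simp_all [eval, ZMod.ne_zero_iff_eq_one]

theorem two_pow_dvd_card_eval_eq_true_and (T : ParityTree N) {ι : Type*} [Fintype ι]
    (f : ι → Module.Dual (ZMod 2) (Fin N → ZMod 2)) (c : ι → ZMod 2) :
    2 ^ (N - T.cost - Fintype.card ι) ∣ #{x | T.eval x = true ∧ ∀ i, f i x = c i} := by
  induction T generalizing ι with
  | leaf b =>
    cases b
    · simp [eval]
    · simpa [eval, cost, funext_iff] using card_pow_dvd_card_fiber (LinearMap.pi f) c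
  | node Q t₀ t₁ ih₀ ih₁ =>
    have h₀ := ih₀ (fun o : Option ι => o.elim (parityForm Q) f) (fun o : Option ι => o.elim 0 c)
    have h₁ := ih₁ (fun o : Option ι => o.elim (parityForm Q) f) (fun o : Option ι => o.elim 1 c)
    simp only [Option.forall, Option.elim, Fintype.card_option] at h₀ h₁
    rw [card_filter_node_eval_eq_true_and, cost]
    exact dvd_add ((pow_dvd_pow 2 (by omega)).trans h₀) ((pow_dvd_pow 2 (by omega)).trans h₁)

theorem two_pow_dvd_card_eval_eq_true (T : ParityTree N) :
    2 ^ (N - T.cost) ∣ #{x | T.eval x = true} := by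
  simpa using T.two_pow_dvd_card_eval_eq_true_and (Empty.elim : Empty → _) Empty.elim

theorem two_pow_dvd_card_eval_eq_true_and_apply_eq (T : ParityTree N) (j : Fin N) (b : ZMod 2) :
    2 ^ (N - T.cost - 1) ∣ #{x | T.eval x = true ∧ x j = b} := by
  simpa using T.two_pow_dvd_card_eval_eq_true_and (fun _ : Unit => LinearMap.proj j) fun _ => b

theorem cost_pos_of_eval_ne (T : ParityTree N) {x y : Fin N → ZMod 2}
    (h : T.eval x ≠ T.eval y) : 0 < T.cost := by
  cases T <;> simp_all [eval, cost]

end ParityTree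

section Majority

variable {α : Type*} [Fintype α]

def majority (x : α → ZMod 2) : Bool :=
  decide (#{i | x i = 0} ≤ #{i | x i = 1})

theorem card_filter_eq_zero_add_card_filter_eq_one (x : α → ZMod 2) :
    #{i | x i = 0} + #{i | x i = 1} = Fintype.card α := by
  rw [← card_univ, ← card_filter_add_card_filter_not (s := univ) (fun i => x i = 0)]
  simp only [ZMod.ne_zero_iff_eq_one]

variable [DecidableEq α]

theorem card_majority_eq_card_filter_ones_le_zeros :
    #{x : α → ZMod 2 | majority x = true} =
      #{x : α → ZMod 2 | #{i | x i = 1} ≤ #{i | x i = 0}} := by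
  have h : ∀ a : ZMod 2, a + 1 = 0 ↔ a = 1 := by decide
  exact card_equiv (Equiv.addRight 1) fun x => by simp [majority, h]

theorem two_mul_card_majority :
    2 * #{x : α → ZMod 2 | majority x = true} =
      2 ^ Fintype.card α + #{x : α → ZMod 2 | #{i | x i = 0} = #{i | x i = 1}} := by
  have h := card_union_add_card_inter {x : α → ZMod 2 | majority x = true}
    {x | #{i | x i = 1} ≤ #{i | x i = 0}}
  rw [← filter_or, ← filter_and, ← card_majority_eq_card_filter_ones_le_zeros] at h
  simp only [majority, decide_eq_true_eq, le_total, filter_true, card_univ, Fintype.card_fun,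
    ZMod.card, ← le_antisymm_iff] at h
  simp only [majority, decide_eq_true_eq]
  omega

theorem card_filter_card_ones_eq (k : ℕ) :
    #{x : α → ZMod 2 | #{i | x i = 1} = k} = (Fintype.card α).choose k := by
  classical
  have h : ∀ a : ZMod 2, (if a = 1 then 1 else 0) = a := by decide
  rw [← Fintype.card_finset_len, Fintype.card_subtype]
  refine card_nbij' (fun x => ({i | x i = 1} : Finset α)) (fun s i => if i ∈ s then 1 else 0)
    ?_ ?_ ?_ ?_
  · intro x hx
    simpa using hx
  · intro s hs
    simpa using hs
  · intro x _
    funext i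
    simp [h]
  · intro s _
    ext i
    simp

end Majority

theorem two_mul_card_majority_fin_two_mul (m : ℕ) :
    2 * #{x : Fin (2 * m) → ZMod 2 | majority x = true} = 2 ^ (2 * m) + (2 * m).choose m := by
  have hties := card_filter_card_ones_eq (α := Fin (2 * m)) m
  rw [Fintype.card_fin] at hties
  rw [two_mul_card_majority, Fintype.card_fin, ← hties]
  congr 2
  ext x
  have := card_filter_eq_zero_add_card_filter_eq_one x
  simp only [mem_filter, mem_univ, true_and, Fintype.card_fin] at this ⊢
  omega

theorem majority_cons_one (m : ℕ) (y : Fin (2 * m) → ZMod 2) :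
    majority (Fin.cons 1 y : Fin (2 * m + 1) → ZMod 2) = majority y := by
  have := card_filter_eq_zero_add_card_filter_eq_one y
  simp only [majority, Fin.card_filter_univ_succ, Fin.cons_zero, Fin.cons_succ]
  simp only [one_ne_zero, if_false, if_true, decide_eq_decide, Fintype.card_fin] at this ⊢
  omega

theorem card_majority_and_apply_zero_eq_one (m : ℕ) :
    #{x : Fin (2 * m + 1) → ZMod 2 | majority x = true ∧ x 0 = 1} =
      #{y : Fin (2 * m) → ZMod 2 | majority y = true} := by
  refine card_nbij' Fin.tail (fun y => Fin.cons 1 y) ?_ ?_ ?_ ?_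
  · intro x hx
    simp only [mem_coe, mem_filter, mem_univ, true_and] at hx ⊢
    rw [← majority_cons_one, ← hx.2, Fin.cons_self_tail]
    exact hx.1
  · intro y hy
    simpa [majority_cons_one] using hy
  · intro x hx
    simp only [mem_coe, mem_filter, mem_univ, true_and] at hx
    rw [← hx.2]
    exact Fin.cons_self_tail x
  · intro y _
    exact Fin.tail_cons _ _

theorem Nat.digits_two_sum_two_mul (m : ℕ) :
    (Nat.digits 2 (2 * m)).sum = (Nat.digits 2 m).sum := by
  rcases m.eq_zero_or_pos with rfl | hm
  · rfl
  · rw [Nat.digits_def' one_lt_two (by omega)]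
    simp

theorem Nat.digits_two_sum_two_mul_add_one (m : ℕ) :
    (Nat.digits 2 (2 * m + 1)).sum = (Nat.digits 2 m).sum + 1 := by
  rw [Nat.digits_def' one_lt_two (by omega), List.sum_cons, show (2 * m + 1) % 2 = 1 by omega,
    show (2 * m + 1) / 2 = m by omega, add_comm]

theorem padicValNat_two_choose_two_mul_self (m : ℕ) :
    padicValNat 2 ((2 * m).choose m) = (Nat.digits 2 m).sum := by
  have h := sub_one_mul_padicValNat_choose_eq_sub_sum_digits (p := 2) (by omega : m ≤ 2 * m)
  rw [show 2 * m - m = m by omega, Nat.digits_two_sum_two_mul] at h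
  omega

theorem lt_digits_two_sum_of_two_pow_dvd_card_majority {m k : ℕ} (hm : 0 < m)
    (h : 2 ^ k ∣ #{x : Fin (2 * m) → ZMod 2 | majority x = true}) :
    k < (Nat.digits 2 m).sum := by
  by_contra! hk
  have hC : ¬ 2 ^ ((Nat.digits 2 m).sum + 1) ∣ (2 * m).choose m := by
    rw [← padicValNat_two_choose_two_mul_self m]
    exact pow_succ_padicValNat_not_dvd (Nat.choose_pos (by omega)).ne'
  set a := (Nat.digits 2 m).sum
  have hW : 2 ^ (a + 1) ∣ 2 ^ (2 * m) + (2 * m).choose m := by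
    rw [← two_mul_card_majority_fin_two_mul, pow_succ']
    exact mul_dvd_mul_left 2 ((pow_dvd_pow 2 hk).trans h)
  have ha : a + 1 ≤ 2 * m := by
    have := Nat.digit_sum_le 2 m
    omega
  exact hC ((Nat.dvd_add_right (pow_dvd_pow 2 ha)).mp hW)

/-- Any PARITY-decision tree computing MAJORITY (1 iff at least as many ones
as zeros) on N bits has cost at least N + 1 - w(N). -/
theorem stmt_7 (N : ℕ) (hN : 0 < N) (T : ParityTree N)
    (hT : ∀ x : Fin N → ZMod 2, T.eval x =
      decide ((Finset.univ.filter fun i => x i = 0).card ≤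
              (Finset.univ.filter fun i => x i = 1).card)) :
    N + 1 - (Nat.digits 2 N).sum ≤ T.cost := by
  have hT' : T.eval = majority := funext hT
  obtain ⟨m, rfl | rfl⟩ := N.even_or_odd'
  · have h := T.two_pow_dvd_card_eval_eq_true
    rw [hT'] at h
    have := lt_digits_two_sum_of_two_pow_dvd_card_majority (by omega) h
    rw [Nat.digits_two_sum_two_mul]
    omega
  · rcases m.eq_zero_or_pos with rfl | hm
    · have := T.cost_pos_of_eval_ne (x := 0) (y := 1) (by rw [hT']; decide)
      norm_num
      omega
    · have h := T.two_pow_dvd_card_eval_eq_true_and_apply_eq 0 1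
      rw [hT', card_majority_and_apply_zero_eq_one] at h
      have := lt_digits_two_sum_of_two_pow_dvd_card_majority hm h
      rw [Nat.digits_two_sum_two_mul_add_one]
      omega
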